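/- If the translation group ℤ² acts on the affine space A of finitely supported φ : ℤ² → ℝ with ∑ φ = 1, then any two affine translation-equivariant operators M, M' : A → ℝ² differ by a constant: M(φ) - M'(φ) is independent of φ. -/

import Mathlib

noncomputable def emb (p : ℤ × ℤ) : ℝ × ℝ := ((p.1 : ℝ), (p.2 : ℝ))

noncomputable def shiftBy (u : ℤ × ℤ) (φ : ℤ × ℤ →₀ ℝ) : ℤ × ℤ →₀ ℝ :=
  Finsupp.mapDomain (fun p => p + u) φ

/-!
An affine equivariant operator is pinned down by its value at the Dirac mass `δ₀`: writing
`φ = ∑ₚ φ(p) δₚ` as an affine combination of Dirac masses and `δₚ` as the translate of `δ₀` by `p`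
gives `M φ = M δ₀ + ∑ₚ φ(p) p`. The difference of two such operators is therefore `M δ₀ - M' δ₀`.
-/

open Finsupp

lemma shiftBy_single_zero (u : ℤ × ℤ) : shiftBy u (single 0 1) = single u 1 := by
  simp [shiftBy, mapDomain_single]

lemma sum_single_one (p : ℤ × ℤ) : (single p (1 : ℝ)).sum (fun _ a => a) = 1 :=
  sum_single_index rfl

section AffineEquivariant

variable (M : (ℤ × ℤ →₀ ℝ) → ℝ × ℝ)
  (haff : ∀ (n : ℕ) (α : Fin n → ℝ) (φ : Fin n → (ℤ × ℤ →₀ ℝ)),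
    (∀ i, (φ i).sum (fun _ a => a) = 1) → ∑ i, α i = 1 →
    M (∑ i, α i • φ i) = ∑ i, α i • M (φ i))

include haff in
lemma map_finset_sum_smul_of_sum_eq_one {ι : Type*} (s : Finset ι) (w : ι → ℝ)
    (f : ι → (ℤ × ℤ →₀ ℝ)) (hf : ∀ i ∈ s, (f i).sum (fun _ a => a) = 1)
    (hw : ∑ i ∈ s, w i = 1) :
    M (∑ i ∈ s, w i • f i) = ∑ i ∈ s, w i • M (f i) := by
  have reindex : ∀ {β : Type} [AddCommMonoid β] (g : ι → β),
      ∑ i ∈ s, g i = ∑ k : Fin s.card, g (s.equivFin.symm k) := fun g => by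
    rw [← s.sum_coe_sort, ← Equiv.sum_comp s.equivFin.symm]
  rw [reindex] at hw ⊢
  rw [reindex]
  exact haff _ _ _ (fun k => hf _ (s.equivFin.symm k).2) hw

variable (hequiv : ∀ (u : ℤ × ℤ) (φ : ℤ × ℤ →₀ ℝ), φ.sum (fun _ a => a) = 1 →
    M (shiftBy u φ) = M φ + emb u)

include haff hequiv in
lemma eq_map_single_zero_add_sum (φ : ℤ × ℤ →₀ ℝ) (hφ : φ.sum (fun _ a => a) = 1) :
    M φ = M (single 0 1) + φ.sum (fun p a => a • emb p) := by
  have hdirac : ∀ p, M (single p 1) = M (single 0 1) + emb p := fun p => by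
    rw [← shiftBy_single_zero, hequiv p _ (sum_single_one 0)]
  have hdecomp : φ = ∑ p ∈ φ.support, φ p • single p (1 : ℝ) := by
    simp only [smul_single, smul_eq_mul, mul_one]
    exact (sum_single φ).symm
  calc M φ = ∑ p ∈ φ.support, φ p • M (single p 1) := by
        conv_lhs => rw [hdecomp]
        exact map_finset_sum_smul_of_sum_eq_one M haff _ _ _
          (fun p _ => sum_single_one p) hφ
    _ = (∑ p ∈ φ.support, φ p) • M (single 0 1) + φ.sum (fun p a => a • emb p) := by
        rw [Finset.sum_congr rfl fun p _ => by rw [hdirac, smul_add], Finset.sum_add_distrib,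
          Finset.sum_smul, Finsupp.sum]
    _ = M (single 0 1) + φ.sum (fun p a => a • emb p) := by
        rw [show ∑ p ∈ φ.support, φ p = 1 from hφ, one_smul]

end AffineEquivariant

/-- Any two affine translation-equivariant operators on the affine space
`{φ finitely supported, ∑ φ = 1}` differ by a constant. -/
theorem stmt_16 (M M' : (ℤ × ℤ →₀ ℝ) → ℝ × ℝ)
    (haff : ∀ (n : ℕ) (α : Fin n → ℝ) (φ : Fin n → (ℤ × ℤ →₀ ℝ)),
      (∀ i, (φ i).sum (fun _ a => a) = 1) → ∑ i, α i = 1 →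
      M (∑ i, α i • φ i) = ∑ i, α i • M (φ i))
    (haff' : ∀ (n : ℕ) (α : Fin n → ℝ) (φ : Fin n → (ℤ × ℤ →₀ ℝ)),
      (∀ i, (φ i).sum (fun _ a => a) = 1) → ∑ i, α i = 1 →
      M' (∑ i, α i • φ i) = ∑ i, α i • M' (φ i))
    (hequiv : ∀ (u : ℤ × ℤ) (φ : ℤ × ℤ →₀ ℝ), φ.sum (fun _ a => a) = 1 →
      M (shiftBy u φ) = M φ + emb u)
    (hequiv' : ∀ (u : ℤ × ℤ) (φ : ℤ × ℤ →₀ ℝ), φ.sum (fun _ a => a) = 1 →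
      M' (shiftBy u φ) = M' φ + emb u) :
    ∀ φ ψ : ℤ × ℤ →₀ ℝ, φ.sum (fun _ a => a) = 1 → ψ.sum (fun _ a => a) = 1 →
      M φ - M' φ = M ψ - M' ψ := by
  intro φ ψ hφ hψ
  rw [eq_map_single_zero_add_sum M haff hequiv φ hφ,
    eq_map_single_zero_add_sum M' haff' hequiv' φ hφ,
    eq_map_single_zero_add_sum M haff hequiv ψ hψ,
    eq_map_single_zero_add_sum M' haff' hequiv' ψ hψ]
  abel
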